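/- Let r ≥ 2 and δ ≥ 2 be integers, and let H be an r-uniform hypergraph with minimum positive codegree δ*(H) = δ. Then γ_{r,H} ≥ δ/r − 1/C(r+δ−1, r−1), where γ_{r,H} is the minimum over nonempty G ⊆ H with |∂_{r−1}(G)| < |∂_{r−1}(H)| of (|E(H)| − |E(G)| − 1)/(|∂_{r−1}(H)| − |∂_{r−1}(G)|). -/
import Mathlib


open Finset

/-- The `m`-shadow of a hypergraph: all `m`-element vertex subsets contained in some edge. -/
def hyperShadow {α : Type*} [DecidableEq α] (m : ℕ) (H : Finset (Finset α)) :
    Finset (Finset α) :=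
  H.sup fun e => e.powersetCard m

/-- The quantity `γ_{s,H}`. -/
noncomputable def gammaVal {α : Type*} [DecidableEq α]
    (s : ℕ) (H : Finset (Finset α)) : ℝ :=
  sInf {x : ℝ | ∃ G : Finset (Finset α), G ⊆ H ∧ G.Nonempty ∧
    (hyperShadow (s - 1) G).card < (hyperShadow (s - 1) H).card ∧
    x = ((H.card : ℝ) - G.card - 1) /
      ((hyperShadow (s - 1) H).card - (hyperShadow (s - 1) G).card)}

/-- The minimum positive codegree `δ*(H)` of an `r`-uniform hypergraph. -/
noncomputable def minPosCodeg {α : Type*} [DecidableEq α]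
    (r : ℕ) (H : Finset (Finset α)) : ℕ :=
  sInf {d | d ≠ 0 ∧ ∃ U : Finset α, U.card = r - 1 ∧
    (H.filter fun e => U ⊆ e).card = d}


namespace GammaAux

variable {α : Type*} [DecidableEq α]

def deg (F : Finset (Finset α)) (U : Finset α) : ℕ := (F.filter fun e => U ⊆ e).card

lemma sum_deg_eq (F S : Finset (Finset α)) :
    ∑ U ∈ S, deg F U = ∑ e ∈ F, (S.filter fun U => U ⊆ e).card := by
  simp only [deg, card_filter]
  exact Finset.sum_comm

lemma t_le {r : ℕ} (S : Finset (Finset α)) (hS : ∀ U ∈ S, U.card = r - 1)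
    {e : Finset α} (he : e.card = r) (hr : 1 ≤ r) :
    (S.filter fun U => U ⊆ e).card ≤ r := by
  have hsub : (S.filter fun U => U ⊆ e) ⊆ e.powersetCard (r - 1) := by
    intro U hU
    rw [mem_filter] at hU
    rw [mem_powersetCard]
    exact ⟨hU.2, hS U hU.1⟩
  calc (S.filter fun U => U ⊆ e).card ≤ (e.powersetCard (r - 1)).card := card_le_card hsub
    _ = r.choose (r - 1) := by rw [card_powersetCard, he]
    _ ≤ r := by
        obtain ⟨n, rfl⟩ : ∃ n, r = n + 1 := ⟨r - 1, by omega⟩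
        simp [Nat.choose_succ_self_right]

lemma sum_deg_le {r : ℕ} (F S : Finset (Finset α)) (hF : ∀ e ∈ F, e.card = r)
    (hS : ∀ U ∈ S, U.card = r - 1) (hr : 1 ≤ r) :
    ∑ U ∈ S, deg F U ≤ r * F.card := by
  rw [sum_deg_eq]
  calc ∑ e ∈ F, (S.filter fun U => U ⊆ e).card ≤ ∑ _e ∈ F, r :=
        Finset.sum_le_sum fun e he => t_le S hS (hF e he) hr
    _ = r * F.card := by rw [Finset.sum_const, smul_eq_mul, mul_comm]

/-- The support-size bound: if the slack is less than `r+1`, the support `V` of `S`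
satisfies `(r+1)*(r+δ) ≤ (r+1)*|V| + (δ-1)*slack`. -/
lemma support_bound {r δ : ℕ} (hr : 1 ≤ r) (hδ : 2 ≤ δ)
    (F S : Finset (Finset α)) (hF : ∀ e ∈ F, e.card = r + 1)
    (hS : ∀ U ∈ S, U.card = r) (hSne : S.Nonempty)
    (hdeg : ∀ U ∈ S, δ ≤ deg F U)
    (sl : ℕ) (hsl : ∑ U ∈ S, deg F U + sl = (r + 1) * F.card)
    (hslr : sl ≤ r) :
    (r + 1) * (r + δ) ≤ (r + 1) * (S.biUnion id).card + (δ - 1) * sl := by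
  set V : Finset α := S.biUnion id with hV
  have hUV : ∀ U ∈ S, U ⊆ V := fun U hU x hx => mem_biUnion.2 ⟨U, hU, hx⟩
  obtain ⟨U₀, hU₀S⟩ := hSne
  have hU₀card : U₀.card = r := hS U₀ hU₀S
  have hU₀V : U₀ ⊆ V := hUV U₀ hU₀S
  set Dg : Finset (Finset α) := F.filter (fun e => U₀ ⊆ e ∧ e ⊆ V) with hDg
  set Db : Finset (Finset α) := F.filter (fun e => U₀ ⊆ e ∧ ¬ e ⊆ V) with hDb
  -- the degree of U₀ splits
  have hsplit : Dg.card + Db.card = deg F U₀ := by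
    have h := Finset.card_filter_add_card_filter_not
      (s := F.filter fun e => U₀ ⊆ e) (p := fun e => e ⊆ V)
    rw [Finset.filter_filter, Finset.filter_filter] at h
    rw [hDg, hDb, deg]
    exact h
  -- (a): r + |Dg| ≤ |V|
  have ha : r + Dg.card ≤ V.card := by
    have hVsplit : (V \ U₀).card + U₀.card = V.card := Finset.card_sdiff_add_card_eq_card hU₀V
    have himg : Dg.card ≤ (V \ U₀).card := by
      have hinj : Set.InjOn (fun e => e \ U₀) Dg := by
        intro e₁ h₁ e₂ h₂ h
        simp only [hDg, Finset.coe_filter, Set.mem_setOf_eq] at h₁ h₂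
        have := Finset.union_sdiff_of_subset h₁.2.1
        have := Finset.union_sdiff_of_subset h₂.2.1
        simp only at h
        calc e₁ = U₀ ∪ (e₁ \ U₀) := (Finset.union_sdiff_of_subset h₁.2.1).symm
          _ = U₀ ∪ (e₂ \ U₀) := by rw [h]
          _ = e₂ := Finset.union_sdiff_of_subset h₂.2.1
      have hsub : Dg.image (fun e => e \ U₀) ⊆ (V \ U₀).powersetCard 1 := by
        intro t ht
        obtain ⟨e, he, rfl⟩ := Finset.mem_image.1 ht
        rw [mem_filter] at he
        rw [mem_powersetCard]
        constructor
        · exact Finset.sdiff_subset_sdiff he.2.2 (le_refl _)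
        · rw [Finset.card_sdiff_of_subset he.2.1, hF e he.1, hU₀card]; omega
      calc Dg.card = (Dg.image (fun e => e \ U₀)).card := (Finset.card_image_of_injOn hinj).symm
        _ ≤ ((V \ U₀).powersetCard 1).card := card_le_card hsub
        _ = (V \ U₀).card := by rw [card_powersetCard, Nat.choose_one_right]
    omega
  -- pointwise bound for bad edges
  have hpoint : ∀ e ∈ F, (U₀ ⊆ e ∧ ¬ e ⊆ V) → (S.filter fun U => U ⊆ e).card ≤ 1 := by
    intro e heF ⟨hU₀e, heV⟩
    have hcard1 : (e \ U₀).card = 1 := by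
      rw [Finset.card_sdiff_of_subset hU₀e, hF e heF, hU₀card]; omega
    obtain ⟨v, hv⟩ := Finset.card_eq_one.1 hcard1
    have hveU : v ∈ e ∧ v ∉ U₀ := by
      have : v ∈ e \ U₀ := by rw [hv]; exact mem_singleton_self v
      exact ⟨(Finset.mem_sdiff.1 this).1, (Finset.mem_sdiff.1 this).2⟩
    have hvV : v ∉ V := by
      intro hvV
      apply heV
      intro x hx
      by_cases hxU : x ∈ U₀
      · exact hU₀V hxU
      · have : x ∈ e \ U₀ := Finset.mem_sdiff.2 ⟨hx, hxU⟩
        rw [hv, Finset.mem_singleton] at this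
        rw [this]; exact hvV
    have : S.filter (fun U => U ⊆ e) ⊆ {U₀} := by
      intro U hU
      rw [mem_filter] at hU
      rw [Finset.mem_singleton]
      by_contra hUU₀
      have hvU : v ∈ U := by
        by_contra hvU
        have hUe : U ⊆ e.erase v := fun x hx =>
          Finset.mem_erase.2 ⟨fun h => hvU (h ▸ hx), hU.2 hx⟩
        have hU₀e' : U₀ ⊆ e.erase v := fun x hx =>
          Finset.mem_erase.2 ⟨fun h => hveU.2 (h ▸ hx), hU₀e hx⟩
        have hcarde : (e.erase v).card = r := by
          rw [Finset.card_erase_of_mem hveU.1, hF e heF]; omega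
        have h1 : U = e.erase v := Finset.eq_of_subset_of_card_le hUe
          (by rw [hcarde, hS U hU.1])
        have h2 : U₀ = e.erase v := Finset.eq_of_subset_of_card_le hU₀e'
          (by rw [hcarde, hU₀card])
        exact hUU₀ (h1.trans h2.symm)
      exact hvV (hUV U hU.1 hvU)
    calc (S.filter fun U => U ⊆ e).card ≤ ({U₀} : Finset (Finset α)).card := card_le_card this
      _ = 1 := Finset.card_singleton _
  -- (b): r * |Db| ≤ sl
  have hb : r * Db.card ≤ sl := by
    have hsum : ∑ U ∈ S, deg F U + r * Db.card ≤ (r + 1) * F.card := by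
      rw [sum_deg_eq]
      have : r * Db.card = ∑ e ∈ F, (if U₀ ⊆ e ∧ ¬ e ⊆ V then r else 0) := by
        rw [← Finset.sum_filter, ← hDb, Finset.sum_const, smul_eq_mul, mul_comm]
      rw [this, ← Finset.sum_add_distrib]
      calc ∑ e ∈ F, ((S.filter fun U => U ⊆ e).card + if U₀ ⊆ e ∧ ¬ e ⊆ V then r else 0)
          ≤ ∑ _e ∈ F, (r + 1) := by
            apply Finset.sum_le_sum
            intro e he
            by_cases hP : U₀ ⊆ e ∧ ¬ e ⊆ V
            · rw [if_pos hP]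
              have := hpoint e he hP
              omega
            · rw [if_neg hP]
              have := t_le (r := r + 1) S (by simpa using hS) (hF e he) (by omega)
              omega
        _ = (r + 1) * F.card := by rw [Finset.sum_const, smul_eq_mul, mul_comm]
    omega
  -- degree bound
  have h5 : δ ≤ Dg.card + Db.card := hsplit ▸ hdeg U₀ hU₀S
  by_cases hd3 : r + 1 ≤ (δ - 1) * r
  · -- case δ ≥ 3 (or more precisely (δ-1)r ≥ r+1)
    have h1 : (r + 1) * r + (r + 1) * Dg.card ≤ (r + 1) * V.card := by
      calc (r + 1) * r + (r + 1) * Dg.card = (r + 1) * (r + Dg.card) := by ring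
        _ ≤ (r + 1) * V.card := Nat.mul_le_mul_left _ ha
    have h2 : (r + 1) * Db.card ≤ (δ - 1) * sl := by
      calc (r + 1) * Db.card ≤ ((δ - 1) * r) * Db.card := Nat.mul_le_mul_right _ hd3
        _ = (δ - 1) * (r * Db.card) := by ring
        _ ≤ (δ - 1) * sl := Nat.mul_le_mul_left _ hb
    calc (r + 1) * (r + δ) = (r + 1) * r + (r + 1) * δ := by ring
      _ ≤ (r + 1) * r + (r + 1) * (Dg.card + Db.card) :=
          Nat.add_le_add_left (Nat.mul_le_mul_left _ h5) _
      _ = ((r + 1) * r + (r + 1) * Dg.card) + (r + 1) * Db.card := by ring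
      _ ≤ (r + 1) * V.card + (δ - 1) * sl := Nat.add_le_add h1 h2
  · -- case δ = 2
    have hδ2 : δ = 2 := by
      by_contra hδ3
      have h2r : 2 * r ≤ (δ - 1) * r := Nat.mul_le_mul_right r (by omega)
      exact hd3 (le_trans (by omega) h2r)
    subst hδ2
    by_cases hDb0 : Db.card = 0
    · have hVge : r + 2 ≤ V.card := by omega
      calc (r + 1) * (r + 2) ≤ (r + 1) * V.card := Nat.mul_le_mul_left _ hVge
        _ ≤ (r + 1) * V.card + (2 - 1) * sl := Nat.le_add_right _ _
    · -- Db.card = 1, sl = r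
      have hDb1 : Db.card = 1 := by
        by_contra hDb2
        have : 2 ≤ Db.card := by omega
        have : r * 2 ≤ r * Db.card := Nat.mul_le_mul_left r this
        omega
      have hslr' : sl = r := by
        have : r * Db.card = r := by rw [hDb1, mul_one]
        omega
      -- main claim: |V| ≥ r + 2
      have hV2 : r + 2 ≤ V.card := by
        by_contra hVle'
        have hVle : V.card ≤ r + 1 := by omega
        have hDgpos : 1 ≤ Dg.card := by omega
        have hVeq : V.card = r + 1 := by omega
        obtain ⟨e₀, he₀⟩ := Finset.card_eq_one.1 hDb1
        have he₀Db : e₀ ∈ Db := by rw [he₀]; exact mem_singleton_self e₀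
        rw [hDb, mem_filter] at he₀Db
        obtain ⟨he₀F, hU₀e₀, he₀V⟩ := he₀Db
        obtain ⟨e₁, he₁Dg⟩ := Finset.card_pos.1 (by omega : 0 < Dg.card)
        rw [hDg, mem_filter] at he₁Dg
        obtain ⟨he₁F, hU₀e₁, he₁V⟩ := he₁Dg
        have he₁₀ : e₁ ≠ e₀ := fun h => he₀V (h ▸ he₁V)
        -- every edge other than e₀ is "full"
        have hfull : ∀ e ∈ F, e ≠ e₀ → S.filter (fun U => U ⊆ e) = e.powersetCard r := by
          intro e heF hee₀
          have hsub : S.filter (fun U => U ⊆ e) ⊆ e.powersetCard r := by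
            intro U hU
            rw [mem_filter] at hU
            rw [mem_powersetCard]
            exact ⟨hU.2, hS U hU.1⟩
          have hpc : (e.powersetCard r).card = r + 1 := by
            rw [card_powersetCard, hF e heF, Nat.choose_succ_self_right]
          apply (Finset.eq_of_subset_of_card_le hsub _).symm.symm
          rw [hpc]
          -- need : r + 1 ≤ (S.filter (· ⊆ e)).card
          by_contra hlt
          have htle : (S.filter (fun U => U ⊆ e)).card ≤ r := by omega
          have hte₀ : (S.filter (fun U => U ⊆ e₀)).card ≤ 1 := hpoint e₀ he₀F ⟨hU₀e₀, he₀V⟩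
          -- sum bound
          have heF' : e ∈ F.erase e₀ := Finset.mem_erase.2 ⟨hee₀, heF⟩
          have hsum1 : ∑ e' ∈ F.erase e₀, (S.filter fun U => U ⊆ e').card
              + (S.filter fun U => U ⊆ e₀).card = ∑ e' ∈ F, (S.filter fun U => U ⊆ e').card :=
            Finset.sum_erase_add F _ he₀F
          have hsum2 : ∑ e' ∈ (F.erase e₀).erase e, (S.filter fun U => U ⊆ e').card
              + (S.filter fun U => U ⊆ e).card
              = ∑ e' ∈ F.erase e₀, (S.filter fun U => U ⊆ e').card :=
            Finset.sum_erase_add _ _ heF'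
          have hrest : ∑ e' ∈ (F.erase e₀).erase e, (S.filter fun U => U ⊆ e').card
              ≤ ((F.erase e₀).erase e).card * (r + 1) := by
            calc ∑ e' ∈ (F.erase e₀).erase e, (S.filter fun U => U ⊆ e').card
                ≤ ∑ _e' ∈ (F.erase e₀).erase e, (r + 1) := by
                  apply Finset.sum_le_sum
                  intro e' he'
                  have he'F : e' ∈ F := Finset.mem_of_mem_erase (Finset.mem_of_mem_erase he')
                  exact t_le (r := r + 1) S (by simpa using hS) (hF e' he'F) (by omega)
              _ = ((F.erase e₀).erase e).card * (r + 1) := by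
                  rw [Finset.sum_const, smul_eq_mul]
          have hcarderase : ((F.erase e₀).erase e).card = F.card - 2 := by
            rw [Finset.card_erase_of_mem heF', Finset.card_erase_of_mem he₀F]; omega
          have hf2 : 2 ≤ F.card := by
            have : ({e₀, e} : Finset (Finset α)) ⊆ F := by
              intro x hx
              rcases Finset.mem_insert.1 hx with h | h
              · exact h ▸ he₀F
              · exact (Finset.mem_singleton.1 h) ▸ heF
            calc 2 = ({e₀, e} : Finset (Finset α)).card := by
                  rw [Finset.card_insert_of_notMem (by simp [Ne.symm hee₀]), Finset.card_singleton]
              _ ≤ F.card := card_le_card this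
          obtain ⟨f', hf'⟩ : ∃ f', F.card = f' + 2 := ⟨F.card - 2, by omega⟩
          have hσ : ∑ U ∈ S, deg F U = ∑ e' ∈ F, (S.filter fun U => U ⊆ e').card := sum_deg_eq F S
          have hbig : (r + 1) * (f' + 2) ≤ 1 + r + (f' * (r + 1) + r) := by
            have e1 : ∑ e' ∈ F, (S.filter fun U => U ⊆ e').card ≤ f' * (r + 1) + r + 1 := by
              rw [← hsum1, ← hsum2]
              have : ((F.erase e₀).erase e).card = f' := by omega
              rw [this] at hrest
              omega
            have e2 : (r + 1) * F.card = ∑ e' ∈ F, (S.filter fun U => U ⊆ e').card + sl := by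
              rw [← hσ, hsl]
            rw [hf'] at e2
            omega
          have : (r + 1) * (f' + 2) = f' * (r + 1) + (2 * r + 2) := by ring
          omega
        -- full edges are inside V
        have hsubV : ∀ e ∈ F, e ≠ e₀ → e ⊆ V := by
          intro e heF hee₀ x hx
          have hecard : 1 < e.card := by rw [hF e heF]; omega
          obtain ⟨y, hy, hyx⟩ := Finset.exists_mem_ne hecard x
          have hUx : e.erase y ∈ S.filter (fun U => U ⊆ e) := by
            rw [hfull e heF hee₀, mem_powersetCard]
            exact ⟨Finset.erase_subset _ _, by rw [Finset.card_erase_of_mem hy, hF e heF]; omega⟩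
          rw [mem_filter] at hUx
          exact mem_biUnion.2 ⟨e.erase y, hUx.1, Finset.mem_erase.2 ⟨Ne.symm hyx, hx⟩⟩
        -- V = e₁
        have hVe₁ : e₁ = V := by
          apply Finset.eq_of_subset_of_card_le he₁V
          rw [hF e₁ he₁F, hVeq]
        -- pick u ∈ U₀ and the witness set U₁
        obtain ⟨u, hu⟩ := Finset.card_pos.1 (by omega : 0 < U₀.card)
        have hue₁ : u ∈ e₁ := hU₀e₁ hu
        set U₁ : Finset α := e₁.erase u with hU₁
        have hU₁S : U₁ ∈ S := by
          have : U₁ ∈ S.filter (fun U => U ⊆ e₁) := by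
            rw [hfull e₁ he₁F he₁₀, mem_powersetCard]
            exact ⟨Finset.erase_subset _ _, by rw [Finset.card_erase_of_mem hue₁, hF e₁ he₁F]; omega⟩
          exact (mem_filter.1 this).1
        have hdegU₁ : 2 ≤ (F.filter fun e => U₁ ⊆ e).card := hdeg U₁ hU₁S
        have he₁mem : e₁ ∈ F.filter fun e => U₁ ⊆ e :=
          mem_filter.2 ⟨he₁F, Finset.erase_subset _ _⟩
        obtain ⟨e₂, he₂mem, he₂₁⟩ :=
          Finset.exists_mem_ne (by omega : 1 < (F.filter fun e => U₁ ⊆ e).card) e₁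
        rw [mem_filter] at he₂mem
        obtain ⟨he₂F, hU₁e₂⟩ := he₂mem
        -- the extra vertex w of e₁
        have hwcard : (e₁ \ U₀).card = 1 := by
          rw [Finset.card_sdiff_of_subset hU₀e₁, hF e₁ he₁F, hU₀card]; omega
        obtain ⟨w, hw⟩ := Finset.card_eq_one.1 hwcard
        have hwmem : w ∈ e₁ ∧ w ∉ U₀ := by
          have : w ∈ e₁ \ U₀ := by rw [hw]; exact mem_singleton_self w
          exact ⟨(Finset.mem_sdiff.1 this).1, (Finset.mem_sdiff.1 this).2⟩
        have hwu : w ≠ u := fun h => hwmem.2 (h ▸ hu)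
        have hwU₁ : w ∈ U₁ := Finset.mem_erase.2 ⟨hwu, hwmem.1⟩
        have hwe₂ : w ∈ e₂ := hU₁e₂ hwU₁
        -- e₂ ≠ e₀
        have he₂₀ : e₂ ≠ e₀ := by
          intro h
          subst h
          -- w ∈ e₂ = e₀, w ∉ U₀, so w is the unique vertex of e₀ \ U₀, which is outside V
          have hv₀card : (e₂ \ U₀).card = 1 := by
            rw [Finset.card_sdiff_of_subset hU₀e₀, hF e₂ he₀F, hU₀card]; omega
          obtain ⟨v₀, hv₀⟩ := Finset.card_eq_one.1 hv₀card
          have hwv₀ : w = v₀ := by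
            have : w ∈ e₂ \ U₀ := Finset.mem_sdiff.2 ⟨hwe₂, hwmem.2⟩
            rw [hv₀, Finset.mem_singleton] at this
            exact this
          have hv₀V : v₀ ∉ V := by
            intro hv₀V
            apply he₀V
            intro x hx
            by_cases hxU : x ∈ U₀
            · exact hU₀V hxU
            · have : x ∈ e₂ \ U₀ := Finset.mem_sdiff.2 ⟨hx, hxU⟩
              rw [hv₀, Finset.mem_singleton] at this
              rw [this]; exact hv₀V
          apply hv₀V
          rw [← hwv₀, ← hVe₁]
          exact hwmem.1
        -- e₂ is full, hence inside V = e₁, contradiction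
        have : e₂ = e₁ := by
          apply Finset.eq_of_subset_of_card_le
          · rw [hVe₁]; exact hsubV e₂ he₂F he₂₀
          · rw [hF e₁ he₁F, hF e₂ he₂F]
        exact he₂₁ this
      calc (r + 1) * (r + 2) ≤ (r + 1) * V.card := Nat.mul_le_mul_left _ hV2
        _ ≤ (r + 1) * V.card + (2 - 1) * sl := Nat.le_add_right _ _

/-- The key lemma. -/
theorem lemC (δ : ℕ) (hδ : 2 ≤ δ) :
    ∀ r : ℕ, 1 ≤ r → ∀ F S : Finset (Finset α),
      (∀ e ∈ F, e.card = r) → (∀ U ∈ S, U.card = r - 1) → S.Nonempty →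
      (∀ U ∈ S, δ ≤ deg F U) →
      r * (r + δ - 1).choose (r - 1) + (r + δ - 1).choose (r - 1) * (∑ U ∈ S, deg F U)
        ≤ r * S.card + (r + δ - 1).choose (r - 1) * (r * F.card) := by
  intro r hr
  induction r, hr using Nat.le_induction with
  | base =>
    intro F S hF hS hSne hdeg
    have hC : (1 + δ - 1).choose (1 - 1) = 1 := by
      simp
    rw [hC]
    have hSeq : S = {∅} := by
      apply Finset.eq_singleton_iff_nonempty_unique_mem.2
      refine ⟨hSne, fun U hU => ?_⟩
      exact Finset.card_eq_zero.1 (by simpa using hS U hU)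
    rw [hSeq]
    simp only [Finset.sum_singleton, Finset.card_singleton]
    have : deg F ∅ ≤ F.card := card_le_card (Finset.filter_subset _ _)
    omega
  | succ r hr IH =>
    intro F S hF hS hSne hdeg
    have hS' : ∀ U ∈ S, U.card = r := by
      intro U hU
      have := hS U hU
      omega
    have hF' : ∀ e ∈ F, e.card = r + 1 := hF
    set C : ℕ := (r + 1 + δ - 1).choose (r + 1 - 1) with hCdef
    set C' : ℕ := (r + δ - 1).choose (r - 1) with hC'def
    have hCeq : C = (r + δ).choose r := by
      rw [hCdef]
      congr 1 <;> omega
    have hid : r * C = (r + δ) * C' := by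
      have h := Nat.add_one_mul_choose_eq (r + δ - 1) (r - 1)
      have e1 : r + δ - 1 + 1 = r + δ := by omega
      have e2 : r - 1 + 1 = r := by omega
      rw [e1, e2] at h
      rw [hCeq, hC'def, mul_comm]
      exact h.symm
    set σ : ℕ := ∑ U ∈ S, deg F U with hσdef
    have hσf : σ ≤ (r + 1) * F.card := sum_deg_le F S hF' (by simpa using hS') (by omega)
    set sl : ℕ := (r + 1) * F.card - σ with hsldef
    have hσsl : σ + sl = (r + 1) * F.card := by omega
    -- reduce to the main inequality
    suffices main : (r + 1) * C ≤ (r + 1) * S.card + C * sl by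
      calc (r + 1) * C + C * σ ≤ ((r + 1) * S.card + C * sl) + C * σ :=
            Nat.add_le_add_right main _
        _ = (r + 1) * S.card + C * (σ + sl) := by ring
        _ = (r + 1) * S.card + C * ((r + 1) * F.card) := by rw [hσsl]
    by_cases hslbig : r + 1 ≤ sl
    · calc (r + 1) * C = C * (r + 1) := mul_comm _ _
        _ ≤ C * sl := Nat.mul_le_mul_left _ hslbig
        _ ≤ (r + 1) * S.card + C * sl := Nat.le_add_left _ _
    · have hslr : sl ≤ r := by omega
      set V : Finset α := S.biUnion id with hV
      have hUV : ∀ U ∈ S, U ⊆ V := fun U hU x hx => mem_biUnion.2 ⟨U, hU, hx⟩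
      have hVb : (r + 1) * (r + δ) ≤ (r + 1) * V.card + (δ - 1) * sl :=
        support_bound hr hδ F S hF' hS' hSne hdeg sl hσsl hslr
      -- per-vertex inequality from the induction hypothesis
      have hper : ∀ v ∈ V, r * C' + C' * (∑ U ∈ S.filter (fun U => v ∈ U), deg F U)
          ≤ r * (S.filter (fun U => v ∈ U)).card
            + C' * (r * (F.filter (fun e => v ∈ e)).card) := by
        intro v hv
        set Fv : Finset (Finset α) := (F.filter (fun e => v ∈ e)).image (fun e => e.erase v)
          with hFvdef
        set Sv : Finset (Finset α) := (S.filter (fun U => v ∈ U)).image (fun U => U.erase v)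
          with hSvdef
        have hSvinj : ∀ a ∈ S.filter (fun U => v ∈ U), ∀ b ∈ S.filter (fun U => v ∈ U),
            a.erase v = b.erase v → a = b := by
          intro a ha b hb h
          rw [mem_filter] at ha hb
          rw [← Finset.insert_erase ha.2, ← Finset.insert_erase hb.2, h]
        have hSvcard : Sv.card = (S.filter (fun U => v ∈ U)).card :=
          card_image_of_injOn (fun a ha b hb h => hSvinj a ha b hb h)
        have hSvne : Sv.Nonempty := by
          rw [hV, mem_biUnion] at hv
          obtain ⟨U, hU, hvU⟩ := hv
          exact ⟨U.erase v, mem_image.2 ⟨U, mem_filter.2 ⟨hU, hvU⟩, rfl⟩⟩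
        have hFvcards : ∀ e' ∈ Fv, e'.card = r := by
          intro e' he'
          obtain ⟨e, he, rfl⟩ := mem_image.1 he'
          rw [mem_filter] at he
          rw [card_erase_of_mem he.2, hF e he.1]
          omega
        have hSvcards : ∀ U' ∈ Sv, U'.card = r - 1 := by
          intro U' hU'
          obtain ⟨U, hU, rfl⟩ := mem_image.1 hU'
          rw [mem_filter] at hU
          rw [card_erase_of_mem hU.2, hS' U hU.1]
        have hdegle : ∀ U ∈ S, v ∈ U → deg F U ≤ deg Fv (U.erase v) := by
          intro U hU hvU
          have hinj2 : Set.InjOn (fun e => e.erase v)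
              (↑(F.filter (fun e => U ⊆ e)) : Set (Finset α)) := by
            intro a ha b hb h
            rw [Finset.mem_coe, mem_filter] at ha hb
            simp only at h
            rw [← Finset.insert_erase (ha.2 hvU), ← Finset.insert_erase (hb.2 hvU), h]
          have hsub2 : (F.filter (fun e => U ⊆ e)).image (fun e => e.erase v)
              ⊆ Fv.filter (fun e' => U.erase v ⊆ e') := by
            intro e' he'
            obtain ⟨e, he, rfl⟩ := mem_image.1 he'
            rw [mem_filter] at he
            refine mem_filter.2 ⟨mem_image.2 ⟨e, mem_filter.2 ⟨he.1, he.2 hvU⟩, rfl⟩, ?_⟩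
            exact Finset.erase_subset_erase v he.2
          calc deg F U = ((F.filter (fun e => U ⊆ e)).image (fun e => e.erase v)).card :=
                (card_image_of_injOn hinj2).symm
            _ ≤ (Fv.filter (fun e' => U.erase v ⊆ e')).card := card_le_card hsub2
            _ = deg Fv (U.erase v) := rfl
        have hdegv : ∀ U' ∈ Sv, δ ≤ deg Fv U' := by
          intro U' hU'
          obtain ⟨U, hU, rfl⟩ := mem_image.1 hU'
          rw [mem_filter] at hU
          exact le_trans (hdeg U hU.1) (hdegle U hU.1 hU.2)
        have hIH := IH Fv Sv hFvcards hSvcards hSvne hdegv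
        have hsum_tr : (∑ U ∈ S.filter (fun U => v ∈ U), deg F U) ≤ ∑ U' ∈ Sv, deg Fv U' := by
          rw [hSvdef, Finset.sum_image hSvinj]
          exact Finset.sum_le_sum
            (fun U hU => hdegle U (mem_filter.1 hU).1 (mem_filter.1 hU).2)
        have hFvle : Fv.card ≤ (F.filter (fun e => v ∈ e)).card := card_image_le
        calc r * C' + C' * (∑ U ∈ S.filter (fun U => v ∈ U), deg F U)
            ≤ r * C' + C' * (∑ U' ∈ Sv, deg Fv U') :=
              Nat.add_le_add_left (Nat.mul_le_mul_left _ hsum_tr) _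
          _ ≤ r * Sv.card + C' * (r * Fv.card) := hIH
          _ ≤ r * (S.filter (fun U => v ∈ U)).card
              + C' * (r * (F.filter (fun e => v ∈ e)).card) := by
              rw [hSvcard]
              exact Nat.add_le_add_left
                (Nat.mul_le_mul_left _ (Nat.mul_le_mul_left _ hFvle)) _
      -- summing the per-vertex inequality over V
      have hsumV : ∑ v ∈ V, (∑ U ∈ S.filter (fun U => v ∈ U), deg F U) = r * σ := by
        have h1 : ∀ v, (∑ U ∈ S.filter (fun U => v ∈ U), deg F U)
            = ∑ U ∈ S, if v ∈ U then deg F U else 0 := fun v => Finset.sum_filter _ _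
        simp_rw [h1]
        rw [Finset.sum_comm]
        have h2 : ∀ U ∈ S, (∑ v ∈ V, if v ∈ U then deg F U else 0) = r * deg F U := by
          intro U hU
          rw [← Finset.sum_filter, Finset.filter_mem_eq_inter,
            Finset.inter_eq_right.2 (hUV U hU), Finset.sum_const, smul_eq_mul, hS' U hU]
        rw [Finset.sum_congr rfl h2, ← Finset.mul_sum]
      have hcntV : ∑ v ∈ V, (S.filter (fun U => v ∈ U)).card = r * S.card := by
        have h1 : ∀ v, (S.filter (fun U => v ∈ U)).card
            = ∑ U ∈ S, if v ∈ U then 1 else 0 := fun v => Finset.card_filter _ _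
        simp_rw [h1]
        rw [Finset.sum_comm]
        have h2 : ∀ U ∈ S, (∑ v ∈ V, if v ∈ U then 1 else 0) = r := by
          intro U hU
          rw [← Finset.sum_filter, Finset.filter_mem_eq_inter,
            Finset.inter_eq_right.2 (hUV U hU), Finset.sum_const, smul_eq_mul, mul_one,
            hS' U hU]
        rw [Finset.sum_congr rfl h2, Finset.sum_const, smul_eq_mul, mul_comm]
      have hcntF : ∑ v ∈ V, (F.filter (fun e => v ∈ e)).card ≤ (r + 1) * F.card := by
        have h1 : ∀ v, (F.filter (fun e => v ∈ e)).card
            = ∑ e ∈ F, if v ∈ e then 1 else 0 := fun v => Finset.card_filter _ _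
        simp_rw [h1]
        rw [Finset.sum_comm]
        have h2 : ∀ e ∈ F, (∑ v ∈ V, if v ∈ e then 1 else 0) ≤ r + 1 := by
          intro e he
          rw [← Finset.sum_filter, Finset.sum_const, smul_eq_mul, mul_one]
          calc (V.filter (fun v => v ∈ e)).card ≤ e.card := by
                apply card_le_card
                intro x hx
                exact (mem_filter.1 hx).2
            _ = r + 1 := hF e he
        calc ∑ e ∈ F, (∑ v ∈ V, if v ∈ e then 1 else 0) ≤ ∑ _e ∈ F, (r + 1) :=
              Finset.sum_le_sum h2
          _ = (r + 1) * F.card := by rw [Finset.sum_const, smul_eq_mul, mul_comm]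
      have hbigsum := Finset.sum_le_sum hper
      have hL : ∑ v ∈ V, (r * C' + C' * (∑ U ∈ S.filter (fun U => v ∈ U), deg F U))
          = V.card * (r * C') + C' * (r * σ) := by
        rw [Finset.sum_add_distrib, Finset.sum_const, smul_eq_mul, ← Finset.mul_sum, hsumV]
      have hR : ∑ v ∈ V, (r * (S.filter (fun U => v ∈ U)).card
            + C' * (r * (F.filter (fun e => v ∈ e)).card))
          ≤ r * (r * S.card) + C' * (r * ((r + 1) * F.card)) := by
        rw [Finset.sum_add_distrib, ← Finset.mul_sum, hcntV]
        have : ∑ v ∈ V, C' * (r * (F.filter (fun e => v ∈ e)).card)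
            = C' * (r * (∑ v ∈ V, (F.filter (fun e => v ∈ e)).card)) := by
          rw [← Finset.mul_sum, ← Finset.mul_sum]
        rw [this]
        exact Nat.add_le_add_left
          (Nat.mul_le_mul_left _ (Nat.mul_le_mul_left _ hcntF)) _
      have hbig : r * (C' * V.card + C' * σ) ≤ r * (r * S.card + C' * ((r + 1) * F.card)) := by
        have e1 : r * (C' * V.card + C' * σ) = V.card * (r * C') + C' * (r * σ) := by ring
        have e2 : r * (r * S.card + C' * ((r + 1) * F.card))
            = r * (r * S.card) + C' * (r * ((r + 1) * F.card)) := by ring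
        rw [e1, e2]
        exact le_trans (le_of_eq hL.symm) (le_trans hbigsum hR)
      have hstar : C' * V.card + C' * σ ≤ r * S.card + C' * ((r + 1) * F.card) :=
        Nat.le_of_mul_le_mul_left hbig (by omega)
      have hstar2 : C' * V.card ≤ r * S.card + C' * sl := by
        have h3 : r * S.card + C' * ((r + 1) * F.card) = (r * S.card + C' * sl) + C' * σ := by
          rw [← hσsl]; ring
        rw [h3] at hstar
        exact Nat.le_of_add_le_add_right hstar
      -- final combination
      have final : r * ((r + 1) * C) ≤ r * ((r + 1) * S.card + C * sl) := by
        have e3 : (r + 1) + (δ - 1) = r + δ := by omega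
        calc r * ((r + 1) * C) = (r + 1) * (r * C) := by ring
          _ = (r + 1) * ((r + δ) * C') := by rw [hid]
          _ = C' * ((r + 1) * (r + δ)) := by ring
          _ ≤ C' * ((r + 1) * V.card + (δ - 1) * sl) := Nat.mul_le_mul_left _ hVb
          _ = (r + 1) * (C' * V.card) + C' * ((δ - 1) * sl) := by ring
          _ ≤ (r + 1) * (r * S.card + C' * sl) + C' * ((δ - 1) * sl) :=
              Nat.add_le_add_right (Nat.mul_le_mul_left _ hstar2) _
          _ = r * ((r + 1) * S.card) + ((r + 1) + (δ - 1)) * (C' * sl) := by ring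
          _ = r * ((r + 1) * S.card) + ((r + δ) * C') * sl := by rw [e3, mul_assoc]
          _ = r * ((r + 1) * S.card) + (r * C) * sl := by rw [← hid]
          _ = r * ((r + 1) * S.card + C * sl) := by ring
      exact Nat.le_of_mul_le_mul_left final (by omega)


lemma mem_hyperShadow {m : ℕ} {G : Finset (Finset α)} {U : Finset α} :
    U ∈ hyperShadow m G ↔ ∃ e ∈ G, U ⊆ e ∧ U.card = m := by
  simp only [hyperShadow, Finset.mem_sup, Finset.mem_powersetCard]

lemma hyperShadow_mono {m : ℕ} {G H : Finset (Finset α)} (h : G ⊆ H) :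
    hyperShadow m G ⊆ hyperShadow m H := by
  intro U hU
  rw [mem_hyperShadow] at hU ⊢
  obtain ⟨e, he, h1, h2⟩ := hU
  exact ⟨e, h he, h1, h2⟩

end GammaAux

open GammaAux

theorem gamma_lower_bound_via_delta_star {α : Type*} [DecidableEq α]
    (r δ : ℕ) (hr : 2 ≤ r) (hδ : 2 ≤ δ)
    (H : Finset (Finset α)) (hne : H.Nonempty)
    (hunif : ∀ e ∈ H, e.card = r)
    (hstar : minPosCodeg r H = δ) :
    (δ : ℝ) / r - 1 / (r + δ - 1).choose (r - 1) ≤ gammaVal r H := by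
  set C : ℕ := (r + δ - 1).choose (r - 1) with hCdef
  have hCpos : 0 < C := Nat.choose_pos (by omega)
  -- every (r-1)-set with positive degree has degree at least δ
  have hdegH : ∀ U : Finset α, U.card = r - 1 → (H.filter fun e => U ⊆ e).card ≠ 0 →
      δ ≤ (H.filter fun e => U ⊆ e).card := by
    intro U hU hpos
    rw [← hstar]
    exact Nat.sInf_le ⟨hpos, U, hU, rfl⟩
  -- two distinct edges
  obtain ⟨e₁, he₁⟩ := hne
  have he₁card : e₁.card = r := hunif e₁ he₁
  obtain ⟨U₁, hU₁sub, hU₁card⟩ :=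
    Finset.exists_subset_card_eq (show r - 1 ≤ e₁.card by omega)
  have he₁mem : e₁ ∈ H.filter fun e => U₁ ⊆ e := mem_filter.2 ⟨he₁, hU₁sub⟩
  have hd1 : δ ≤ (H.filter fun e => U₁ ⊆ e).card :=
    hdegH U₁ hU₁card (by
      intro h
      rw [Finset.card_eq_zero] at h
      rw [h] at he₁mem
      exact absurd he₁mem (Finset.notMem_empty _))
  obtain ⟨e₂, he₂mem, he₂₁⟩ :=
    Finset.exists_mem_ne (by omega : 1 < (H.filter fun e => U₁ ⊆ e).card) e₁
  have he₂H : e₂ ∈ H := (mem_filter.1 he₂mem).1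
  have he₂card : e₂.card = r := hunif e₂ he₂H
  -- the defining set of gammaVal is nonempty
  have hwitness : ∃ x : ℝ, x ∈ {x : ℝ | ∃ G : Finset (Finset α), G ⊆ H ∧ G.Nonempty ∧
      (hyperShadow (r - 1) G).card < (hyperShadow (r - 1) H).card ∧
      x = ((H.card : ℝ) - G.card - 1) /
        ((hyperShadow (r - 1) H).card - (hyperShadow (r - 1) G).card)} := by
    obtain ⟨v, hv⟩ : (e₂ \ e₁).Nonempty := by
      rw [Finset.sdiff_nonempty]
      intro hsub
      exact he₂₁ (Finset.eq_of_subset_of_card_le hsub (by omega))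
    rw [Finset.mem_sdiff] at hv
    obtain ⟨U₂, hvU₂, hU₂e₂, hU₂card⟩ :=
      Finset.exists_subsuperset_card_eq (n := r - 1) (Finset.singleton_subset_iff.2 hv.1)
        (by rw [Finset.card_singleton]; omega) (by omega)
    refine ⟨_, ⟨{e₁}, Finset.singleton_subset_iff.2 he₁, ⟨e₁, mem_singleton_self e₁⟩, ?_, rfl⟩⟩
    apply Finset.card_lt_card
    rw [Finset.ssubset_iff_of_subset (hyperShadow_mono (Finset.singleton_subset_iff.2 he₁))]
    refine ⟨U₂, mem_hyperShadow.2 ⟨e₂, he₂H, hU₂e₂, hU₂card⟩, ?_⟩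
    rw [mem_hyperShadow]
    rintro ⟨e, he, hU₂e, -⟩
    rw [Finset.mem_singleton] at he
    subst he
    exact hv.2 (hU₂e (Finset.singleton_subset_iff.1 hvU₂))
  -- main bound for each member of the set
  apply le_csInf hwitness
  rintro x ⟨G, hGH, hGne, hGcard, rfl⟩
  set S : Finset (Finset α) := hyperShadow (r - 1) H \ hyperShadow (r - 1) G with hSdef
  set F : Finset (Finset α) := H \ G with hFdef
  have hshsub : hyperShadow (r - 1) G ⊆ hyperShadow (r - 1) H := hyperShadow_mono hGH
  have hkcard : S.card = (hyperShadow (r - 1) H).card - (hyperShadow (r - 1) G).card :=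
    Finset.card_sdiff_of_subset hshsub
  have hkpos : 0 < S.card := by
    rw [hkcard]
    omega
  have hScards : ∀ U ∈ S, U.card = r - 1 := by
    intro U hU
    rw [hSdef, Finset.mem_sdiff] at hU
    exact (mem_hyperShadow.1 hU.1).choose_spec.2.2
  have hSne : S.Nonempty := Finset.card_pos.1 hkpos
  have hFcards : ∀ e ∈ F, e.card = r := fun e he => hunif e (Finset.mem_sdiff.1 he).1
  have hfilter_eq : ∀ U ∈ S, H.filter (fun e => U ⊆ e) = F.filter (fun e => U ⊆ e) := by
    intro U hU
    rw [hSdef, Finset.mem_sdiff] at hU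
    apply Finset.Subset.antisymm
    · intro e he
      rw [mem_filter] at he
      refine mem_filter.2 ⟨Finset.mem_sdiff.2 ⟨he.1, fun heG => ?_⟩, he.2⟩
      exact hU.2 (mem_hyperShadow.2 ⟨e, heG, he.2, (mem_hyperShadow.1 hU.1).choose_spec.2.2⟩)
    · intro e he
      rw [mem_filter] at he
      exact mem_filter.2 ⟨(Finset.mem_sdiff.1 he.1).1, he.2⟩
  have hdegF : ∀ U ∈ S, δ ≤ deg F U := by
    intro U hU
    have hU' := hU
    rw [hSdef, Finset.mem_sdiff] at hU'
    obtain ⟨e, heH, hUe, hc⟩ := mem_hyperShadow.1 hU'.1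
    have hne' : (H.filter fun e => U ⊆ e).card ≠ 0 := by
      intro h
      rw [Finset.card_eq_zero] at h
      have : e ∈ H.filter fun e => U ⊆ e := mem_filter.2 ⟨heH, hUe⟩
      rw [h] at this
      exact absurd this (Finset.notMem_empty _)
    have := hdegH U hc hne'
    rwa [hfilter_eq U hU] at this
  -- apply the key lemma
  have hkey := lemC δ hδ r (by omega) F S hFcards hScards hSne hdegF
  have hσδ : δ * S.card ≤ ∑ U ∈ S, deg F U := by
    calc δ * S.card = ∑ _U ∈ S, δ := by rw [Finset.sum_const, smul_eq_mul, mul_comm]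
      _ ≤ ∑ U ∈ S, deg F U := Finset.sum_le_sum hdegF
  have hkey2 : r * C + C * (δ * S.card) ≤ r * S.card + C * (r * F.card) :=
    le_trans (Nat.add_le_add_left (Nat.mul_le_mul_left _ hσδ) _) hkey
  -- translate to the reals
  have hGle : G.card ≤ H.card := card_le_card hGH
  have hmeq : (F.card : ℝ) = (H.card : ℝ) - G.card := by
    rw [hFdef, Finset.card_sdiff_of_subset hGH]
    push_cast [Nat.cast_sub hGle]
    ring
  have hkeq : (S.card : ℝ) = ((hyperShadow (r - 1) H).card : ℝ)
      - ((hyperShadow (r - 1) G).card : ℝ) := by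
    rw [hkcard]
    push_cast [Nat.cast_sub (card_le_card hshsub)]
    ring
  rw [← hmeq, ← hkeq]
  have hkey2R : (r : ℝ) * C + C * (δ * S.card) ≤ r * S.card + C * (r * F.card) := by
    exact_mod_cast hkey2
  have hrpos : (0 : ℝ) < r := by exact_mod_cast (by omega : 0 < r)
  have hCposR : (0 : ℝ) < C := by exact_mod_cast hCpos
  have hkposR : (0 : ℝ) < S.card := by exact_mod_cast hkpos
  rw [div_sub_div _ _ (ne_of_gt hrpos) (ne_of_gt hCposR),
    div_le_div_iff₀ (by positivity) hkposR]
  nlinarith [hkey2R]
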